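/- The group SL(2,ℤ) admits the presentation ⟨y, u ∣ yuy = uyu, (yuy)^4 = 1⟩, where y corresponds to the matrix [[1,1],[0,1]] and u to [[1,0],[-1,1]]. -/

import Mathlib

/-!
Put `s = yuy` and `r = ys`. The relations give `s * u = r`, `s * y = u * s`, `r ^ 3 = s ^ 4 = 1`
and make `s ^ 2` central, so `s` and `r` generate the group and every element can be written
`r ^ j * w * s ^ q` with `w` a positive word in `u` and `y⁻¹` (modulo the centre, the alternating
normal form of `C₂ ∗ C₃`). A ping-pong argument rules out cancellation: the images `U` and
`T⁻¹` of `u` and `y⁻¹` have sign pattern `[[+, -], [-, +]]`, left multiplication by either keeps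
that pattern and does not decrease the entry mass, so a nonempty positive word maps to a matrix of
this shape with mass at least `3`. None of the twelve matrices `(S T⁻¹) ^ j * S ^ q` (`j < 3`,
`q < 4`) is of this shape, which makes the natural map to `SL(2, ℤ)` injective. It is onto
because `S` and `T` generate `SL(2, ℤ)`.
-/

/-- Generators of the presentation: `y` and `u`. -/
inductive SL2Gen | y | u
deriving DecidableEq

open FreeGroup in
/-- Relators: `yuy (uyu)⁻¹` and `(yuy)^4`. -/
def SL2Rels : Set (FreeGroup SL2Gen) :=
  { of SL2Gen.y * of SL2Gen.u * of SL2Gen.y * (of SL2Gen.u * of SL2Gen.y * of SL2Gen.u)⁻¹,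
    (of SL2Gen.y * of SL2Gen.u * of SL2Gen.y) ^ 4 }

/-- The matrix `[[1,1],[0,1]]` as an element of `SL(2,ℤ)`. -/
def SL2y : Matrix.SpecialLinearGroup (Fin 2) ℤ :=
  ⟨!![1, 1; 0, 1], by simp [Matrix.det_fin_two_of]⟩

/-- The matrix `[[1,0],[-1,1]]` as an element of `SL(2,ℤ)`. -/
def SL2u : Matrix.SpecialLinearGroup (Fin 2) ℤ :=
  ⟨!![1, 0; -1, 1], by simp [Matrix.det_fin_two_of]⟩

open ModularGroup MatrixGroups

namespace SL2Presentation

abbrev P := PresentedGroup SL2Rels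

def y : P := .of .y
def u : P := .of .u
def s : P := y * u * y
def r : P := y * s

lemma y_mul_u_mul_y : y * u * y = u * y * u := by
  have h : y * u * y * (u * y * u)⁻¹ = 1 := PresentedGroup.one_of_mem (Set.mem_insert _ _)
  exact mul_inv_eq_one.1 h

lemma s_pow_four : s ^ 4 = 1 :=
  PresentedGroup.one_of_mem (Set.mem_insert_of_mem _ rfl)

lemma s_mul_y : s * y = u * s := by
  rw [s]; conv_lhs => rw [y_mul_u_mul_y]
  group

lemma s_mul_u : s * u = r := by
  rw [r, s]; conv_rhs => rw [y_mul_u_mul_y]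
  group

lemma commute_s_sq_y : Commute (s ^ 2) y := by
  calc s ^ 2 * y = s * (s * y) := by rw [sq, mul_assoc]
    _ = s * u * s := by rw [s_mul_y, mul_assoc]
    _ = y * s ^ 2 := by rw [s_mul_u, r, sq, mul_assoc]

lemma commute_s_sq_u : Commute (s ^ 2) u := by
  calc s ^ 2 * u = s * r := by rw [← s_mul_u, sq, mul_assoc]
    _ = s * y * s := by rw [r, mul_assoc]
    _ = u * s ^ 2 := by rw [s_mul_y, sq, mul_assoc]

lemma commute_s_sq (x : P) : Commute (s ^ 2) x := by
  have hx : x ∈ Subgroup.closure (Set.range PresentedGroup.of) := by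
    simp [PresentedGroup.closure_range_of]
  induction hx using Subgroup.closure_induction with
  | mem _ h => obtain ⟨_ | _, rfl⟩ := h; exacts [commute_s_sq_y, commute_s_sq_u]
  | one => exact Commute.one_right _
  | mul _ _ _ _ h₁ h₂ => exact h₁.mul_right h₂
  | inv _ _ h => exact h.inv_right

lemma r_pow_three : r ^ 3 = 1 := by
  calc r ^ 3 = y * (s * y) * s * y * s := by
        simp only [r, pow_succ, pow_zero, one_mul, mul_assoc]
    _ = y * u * (s ^ 2 * y) * s := by simp only [s_mul_y, sq, mul_assoc]
    _ = s ^ 4 := by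
        rw [commute_s_sq_y.eq, s]; simp only [pow_succ, pow_zero, one_mul, mul_assoc]
    _ = 1 := s_pow_four

lemma s_mul_r : s * r = u * s ^ 2 := by
  rw [r, ← mul_assoc, s_mul_y, sq, mul_assoc]

lemma s_mul_r_sq : s * r ^ 2 = y⁻¹ := by
  rw [show r ^ 2 = r⁻¹ from eq_inv_of_mul_eq_one_left (by rw [← pow_succ, r_pow_three]), r]
  group

lemma s_mul_y_inv : s * y⁻¹ = r ^ 2 * s ^ 2 := by
  calc s * y⁻¹ = s * (s * r ^ 2) := by rw [s_mul_r_sq]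
    _ = s ^ 2 * r ^ 2 := by rw [← mul_assoc, ← sq]
    _ = r ^ 2 * s ^ 2 := (commute_s_sq _).eq

lemma closure_s_r : Subgroup.closure {s, r} = ⊤ := by
  rw [eq_top_iff, ← PresentedGroup.closure_range_of, Subgroup.closure_le, Set.range_subset_iff]
  have hs : s ∈ Subgroup.closure {s, r} := Subgroup.subset_closure (by simp)
  have hr : r ∈ Subgroup.closure {s, r} := Subgroup.subset_closure (by simp)
  rintro (_ | _)
  · rw [show PresentedGroup.of SL2Gen.y = r * s⁻¹ by rw [r, mul_inv_cancel_right]; rfl]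
    exact mul_mem hr (inv_mem hs)
  · rw [show PresentedGroup.of SL2Gen.u = s⁻¹ * r by rw [← s_mul_u, inv_mul_cancel_left]; rfl]
    exact mul_mem (inv_mem hs) hr

def positiveWords : Submonoid P := Submonoid.closure {u, y⁻¹}

lemma eq_one_or_exists_of_mem_positiveWords {w : P} (hw : w ∈ positiveWords) :
    w = 1 ∨ ∃ w' ∈ positiveWords, w = u * w' ∨ w = y⁻¹ * w' := by
  induction hw using Submonoid.closure_induction_left with
  | one => exact .inl rfl
  | mul_left a ha w' hw' _ =>
    rcases ha with rfl | rfl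
    exacts [.inr ⟨w', hw', .inl rfl⟩, .inr ⟨w', hw', .inr rfl⟩]

def HasNormalForm (x : P) : Prop := ∃ j q : ℕ, ∃ w ∈ positiveWords, x = r ^ j * w * s ^ q

lemma HasNormalForm.r_mul {x : P} (h : HasNormalForm x) : HasNormalForm (r * x) := by
  obtain ⟨j, q, w, hw, rfl⟩ := h
  exact ⟨j + 1, q, w, hw, by rw [pow_succ']; simp only [mul_assoc]⟩

lemma HasNormalForm.s_mul {x : P} (h : HasNormalForm x) : HasNormalForm (s * x) := by
  obtain ⟨j, q, w, hw, rfl⟩ := h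
  have hu : u ∈ positiveWords := Submonoid.subset_closure (by simp)
  have hy : y⁻¹ ∈ positiveWords := Submonoid.subset_closure (by simp)
  rw [pow_eq_pow_mod j r_pow_three]
  have hj : j % 3 < 3 := Nat.mod_lt _ (by norm_num)
  generalize j % 3 = j at hj
  interval_cases j
  · rcases eq_one_or_exists_of_mem_positiveWords hw with rfl | ⟨w', hw', rfl | rfl⟩
    · exact ⟨0, q + 1, 1, one_mem _, by simp [pow_succ']⟩
    · exact ⟨1, q, w', hw', by simp [← s_mul_u, mul_assoc]⟩
    · refine ⟨2, q + 2, w', hw', ?_⟩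
      calc s * (r ^ 0 * (y⁻¹ * w') * s ^ q) = s * y⁻¹ * w' * s ^ q := by
            simp only [pow_zero, one_mul, mul_assoc]
        _ = r ^ 2 * (s ^ 2 * w') * s ^ q := by rw [s_mul_y_inv]; simp only [mul_assoc]
        _ = r ^ 2 * w' * s ^ (q + 2) := by
            rw [(commute_s_sq w').eq, add_comm, pow_add]; simp only [mul_assoc]
  · refine ⟨0, q + 2, u * w, mul_mem hu hw, ?_⟩
    calc s * (r ^ 1 * w * s ^ q) = s * r * w * s ^ q := by simp only [pow_one, mul_assoc]
      _ = u * (s ^ 2 * w) * s ^ q := by rw [s_mul_r]; simp only [mul_assoc]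
      _ = r ^ 0 * (u * w) * s ^ (q + 2) := by
          rw [(commute_s_sq w).eq, add_comm, pow_add]; simp only [pow_zero, one_mul, mul_assoc]
  · exact ⟨0, q, y⁻¹ * w, mul_mem hy hw, by simp [← s_mul_r_sq, mul_assoc]⟩

lemma hasNormalForm (x : P) : HasNormalForm x := by
  have hx : x ∈ Subgroup.closure {s, r} := by simp [closure_s_r]
  have inv_s : s⁻¹ = s ^ 3 := (eq_inv_of_mul_eq_one_left (by rw [← pow_succ, s_pow_four])).symm
  have inv_r : r⁻¹ = r ^ 2 :=
    (eq_inv_of_mul_eq_one_left (by rw [← pow_succ, r_pow_three])).symm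
  induction hx using Subgroup.closure_induction_left with
  | one => exact ⟨0, 0, 1, one_mem _, by simp⟩
  | mul_left a ha x _ h =>
    rcases ha with rfl | rfl
    exacts [h.s_mul, h.r_mul]
  | inv_mul_cancel a ha x _ h =>
    rcases ha with rfl | rfl
    · rw [inv_s, pow_succ, sq, mul_assoc, mul_assoc]
      exact h.s_mul.s_mul.s_mul
    · rw [inv_r, sq, mul_assoc]
      exact h.r_mul.r_mul

def toSL2 : P →* SL(2, ℤ) :=
  PresentedGroup.toGroup (f := fun | .y => SL2y | .u => SL2u) <| by
    rintro _ (rfl | rfl) <;>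
      simp only [map_mul, map_inv, map_pow, FreeGroup.lift_apply_of] <;> decide

lemma toSL2_y : toSL2 y = SL2y := PresentedGroup.toGroup.of _

lemma toSL2_u : toSL2 u = SL2u := PresentedGroup.toGroup.of _

lemma toSL2_s_inv : toSL2 s⁻¹ = S := by
  rw [s, map_inv, map_mul, map_mul, toSL2_y, toSL2_u]; decide

lemma toSL2_r_inv : toSL2 r⁻¹ = S * T⁻¹ := by
  rw [r, mul_inv_rev, map_mul, toSL2_s_inv, map_inv, toSL2_y]; rfl

lemma toSL2_surjective : Function.Surjective toSL2 := by
  rw [← MonoidHom.range_eq_top, eq_top_iff, ← SpecialLinearGroup.SL2Z_generators,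
    Subgroup.closure_le]
  rintro _ (rfl | rfl)
  · exact ⟨s⁻¹, toSL2_s_inv⟩
  · exact ⟨y, toSL2_y⟩

/-- `A = D N D` with `D = diag(1, -1)` and `N` a nonnegative matrix of entry sum at least `3`. -/
def IsTwistedPositive (A : SL(2, ℤ)) : Prop :=
  0 ≤ A 0 0 ∧ A 0 1 ≤ 0 ∧ A 1 0 ≤ 0 ∧ 0 ≤ A 1 1 ∧
    3 ≤ A 0 0 - A 0 1 - A 1 0 + A 1 1

lemma isTwistedPositive_SL2u : IsTwistedPositive SL2u := by unfold IsTwistedPositive; decide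

lemma isTwistedPositive_T_inv : IsTwistedPositive T⁻¹ := by unfold IsTwistedPositive; decide

lemma IsTwistedPositive.SL2u_mul {A : SL(2, ℤ)} (h : IsTwistedPositive A) :
    IsTwistedPositive (SL2u * A) := by
  obtain ⟨h₀₀, h₀₁, h₁₀, h₁₁, hsum⟩ := h
  have hSL2u : (SL2u : Matrix (Fin 2) (Fin 2) ℤ) = !![1, 0; -1, 1] := rfl
  simp only [IsTwistedPositive, Fin.isValue, Matrix.SpecialLinearGroup.coe_mul, hSL2u,
    Matrix.mul_apply, Fin.sum_univ_two, Matrix.of_apply, Matrix.cons_val', Matrix.cons_val_zero,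
    Matrix.cons_val_one, Matrix.cons_val_fin_one]
  omega

lemma IsTwistedPositive.T_inv_mul {A : SL(2, ℤ)} (h : IsTwistedPositive A) :
    IsTwistedPositive (T⁻¹ * A) := by
  obtain ⟨h₀₀, h₀₁, h₁₀, h₁₁, hsum⟩ := h
  simp only [IsTwistedPositive, Fin.isValue, Matrix.SpecialLinearGroup.coe_mul, coe_T_inv,
    Matrix.mul_apply, Fin.sum_univ_two, Matrix.of_apply, Matrix.cons_val', Matrix.cons_val_zero,
    Matrix.cons_val_one, Matrix.cons_val_fin_one]
  omega

lemma eq_one_or_isTwistedPositive {w : P} (hw : w ∈ positiveWords) :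
    w = 1 ∨ IsTwistedPositive (toSL2 w) := by
  induction hw using Submonoid.closure_induction_left with
  | one => exact .inl rfl
  | mul_left a ha w _ h =>
    right
    rcases ha with rfl | rfl
    · rw [map_mul, toSL2_u]
      rcases h with rfl | h
      · simpa using isTwistedPositive_SL2u
      · exact h.SL2u_mul
    · rw [map_mul, map_inv, toSL2_y, show SL2y = T from rfl]
      rcases h with rfl | h
      · simpa using isTwistedPositive_T_inv
      · exact h.T_inv_mul

lemma eq_zero_of_S_mul_T_inv_pow_mul_S_pow_eq_one :
    ∀ j < 3, ∀ q < 4, (S * T⁻¹) ^ j * S ^ q = 1 → j = 0 ∧ q = 0 := by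
  decide

lemma not_isTwistedPositive_S_mul_T_inv_pow_mul_S_pow :
    ∀ j < 3, ∀ q < 4, ¬ IsTwistedPositive ((S * T⁻¹) ^ j * S ^ q) := by
  unfold IsTwistedPositive; decide

lemma toSL2_injective : Function.Injective toSL2 := by
  refine (injective_iff_map_eq_one _).2 fun x hx => ?_
  obtain ⟨j, q, w, hw, rfl⟩ := hasNormalForm x
  rw [pow_eq_pow_mod j r_pow_three, pow_eq_pow_mod q s_pow_four] at hx ⊢
  have hj : j % 3 < 3 := Nat.mod_lt j (by norm_num)
  have hq : q % 4 < 4 := Nat.mod_lt q (by norm_num)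
  generalize j % 3 = j at *
  generalize q % 4 = q at *
  have hw_eq : toSL2 w = (S * T⁻¹) ^ j * S ^ q := by
    rw [show w = r⁻¹ ^ j * (r ^ j * w * s ^ q) * s⁻¹ ^ q by group, map_mul, map_mul, hx,
      map_pow, map_pow, toSL2_r_inv, toSL2_s_inv, mul_one]
  rcases eq_one_or_isTwistedPositive hw with rfl | hpos
  · obtain ⟨rfl, rfl⟩ :=
      eq_zero_of_S_mul_T_inv_pow_mul_S_pow_eq_one j hj q hq (by rw [← hw_eq, map_one])
    simp
  · exact absurd (hw_eq ▸ hpos) (not_isTwistedPositive_S_mul_T_inv_pow_mul_S_pow j hj q hq)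

end SL2Presentation

/-- `SL(2,ℤ)` admits the presentation `⟨y, u ∣ yuy = uyu, (yuy)^4 = 1⟩`, where `y`
corresponds to `[[1,1],[0,1]]` and `u` to `[[1,0],[-1,1]]`. -/
theorem SL2Z_presentation :
    ∃ φ : PresentedGroup SL2Rels ≃* Matrix.SpecialLinearGroup (Fin 2) ℤ,
      φ (PresentedGroup.of SL2Gen.y) = SL2y ∧ φ (PresentedGroup.of SL2Gen.u) = SL2u :=
  ⟨MulEquiv.ofBijective SL2Presentation.toSL2
      ⟨SL2Presentation.toSL2_injective, SL2Presentation.toSL2_surjective⟩,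
    SL2Presentation.toSL2_y, SL2Presentation.toSL2_u⟩
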